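/- arXiv:1908.02259 — 5 statements merged into one kernel-verified Lean document; each statement's English description precedes it below -/
import Mathlib

section
/- The quotient metric space (QC⁰[0,1], D_Ψ) is a Polish space: it is separable and complete. -/
def C0 (f : ℝ → ℝ) : Prop := ContinuousOn f (Set.Icc 0 1) ∧ f 0 = 0 ∧ f 1 = 0

noncomputable def Psi (a : ℝ) (g : ℝ → ℝ) : ℝ → ℝ := fun x => g (Int.fract (x + a)) - g a

noncomputable def supDist (f g : ℝ → ℝ) : ℝ := sSup {v : ℝ | ∃ x ∈ Set.Icc (0:ℝ) 1, v = |f x - g x|}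

noncomputable def DPsi (f g : ℝ → ℝ) : ℝ :=
  sInf {v : ℝ | ∃ a ∈ Set.Icc (0:ℝ) 1, v = supDist f (Psi a g)}

open Set Filter Topology

/-! Separability: the continuous functions on `[0,1]` vanishing at both ends form a subset of the
separable space `C([0,1], ℝ)`, hence contain a countable sup-dense family, and `D_Ψ` is bounded by
the sup distance (take `a = 0`).

Completeness: `Ψ_a` is `2`-Lipschitz for the sup norm and `Ψ_a ∘ Ψ_b = Ψ_{(a + b) mod 1}`, whence
`D_Ψ(f, h) ≤ D_Ψ(f, g) + 2 D_Ψ(g, h)`. Pass to a subsequence with `D_Ψ(u_k, u_{k+1}) < 2^{-k}` and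
shift its terms by the cumulative shifts `c_{k+1} = (c_k + a_k) mod 1`: consecutive shifted terms
are then `2^{1-k}`-close in sup norm, and their uniform limit is a `D_Ψ`-limit of the sequence. -/

lemma comp_fract_eqOn {g : ℝ → ℝ} (hg : g 0 = g 1) : EqOn (g ∘ Int.fract) g (Icc 0 1) := by
  intro x hx
  rcases hx.2.lt_or_eq with hx1 | rfl
  · simp [Int.fract_eq_self.2 ⟨hx.1, hx1⟩]
  · simp [hg]

lemma Psi_Psi (a b : ℝ) (g : ℝ → ℝ) : Psi a (Psi b g) = Psi (Int.fract (a + b)) g := by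
  ext x
  have : Int.fract (Int.fract (x + a) + b) = Int.fract (x + Int.fract (a + b)) :=
    Int.fract_eq_fract.2 ⟨⌊a + b⌋ - ⌊x + a⌋, by push_cast [Int.fract]; ring⟩
  simp only [Psi, this]
  ring

lemma Psi_zero_eqOn {g : ℝ → ℝ} (hg0 : g 0 = 0) (hg1 : g 1 = 0) : EqOn (Psi 0 g) g (Icc 0 1) := by
  intro x hx
  simpa [Psi, hg0] using comp_fract_eqOn (hg0.trans hg1.symm) hx

lemma abs_Psi_sub_Psi_le {g h : ℝ → ℝ} {a C : ℝ} (ha : a ∈ Icc (0:ℝ) 1)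
    (hgh : ∀ y ∈ Icc (0:ℝ) 1, |g y - h y| ≤ C) (x : ℝ) : |Psi a g x - Psi a h x| ≤ 2 * C := by
  have h₁ := hgh _ (unitInterval.fract_mem (x + a))
  have h₂ := hgh a ha
  calc |Psi a g x - Psi a h x|
      = |(g (Int.fract (x + a)) - h (Int.fract (x + a))) - (g a - h a)| := by
        simp only [Psi]; ring_nf
    _ ≤ |g (Int.fract (x + a)) - h (Int.fract (x + a))| + |g a - h a| := abs_sub _ _
    _ ≤ 2 * C := by linarith

lemma C0_Psi {g : ℝ → ℝ} (hg : C0 g) {a : ℝ} (ha : a ∈ Icc (0:ℝ) 1) : C0 (Psi a g) := by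
  obtain ⟨hgc, hg0, hg1⟩ := hg
  have hfract : g (Int.fract a) = g a := comp_fract_eqOn (hg0.trans hg1.symm) ha
  refine ⟨Continuous.continuousOn ?_, ?_, ?_⟩
  · exact ((hgc.comp_fract'' (hg0.trans hg1.symm)).comp (continuous_add_const a)).sub
      continuous_const
  · simp [Psi, hfract]
  · simp [Psi, Int.fract_one_add, hfract]

lemma supDist_le {f g : ℝ → ℝ} {C : ℝ} (hC : 0 ≤ C)
    (h : ∀ x ∈ Icc (0:ℝ) 1, |f x - g x| ≤ C) : supDist f g ≤ C :=
  Real.sSup_le (by rintro v ⟨x, hx, rfl⟩; exact h x hx) hC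

-- `sSup` of a set that is not bounded above is `0`, so this needs the bound from compactness.
lemma abs_sub_le_supDist {f g : ℝ → ℝ} (hf : ContinuousOn f (Icc 0 1))
    (hg : ContinuousOn g (Icc 0 1)) {x : ℝ} (hx : x ∈ Icc (0:ℝ) 1) :
    |f x - g x| ≤ supDist f g := by
  obtain ⟨C, hC⟩ := isCompact_Icc.exists_bound_of_continuousOn (hf.sub hg)
  exact le_csSup ⟨C, by rintro v ⟨y, hy, rfl⟩; exact hC y hy⟩ ⟨x, hx, rfl⟩

lemma supDist_nonneg (f g : ℝ → ℝ) : 0 ≤ supDist f g :=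
  Real.sSup_nonneg <| by rintro v ⟨x, -, rfl⟩; exact abs_nonneg _

lemma DPsi_nonneg (f g : ℝ → ℝ) : 0 ≤ DPsi f g :=
  Real.sInf_nonneg <| by rintro v ⟨a, -, rfl⟩; exact supDist_nonneg _ _

lemma DPsi_le_of_abs_sub_Psi_le {f g : ℝ → ℝ} {a C : ℝ} (ha : a ∈ Icc (0:ℝ) 1) (hC : 0 ≤ C)
    (h : ∀ x ∈ Icc (0:ℝ) 1, |f x - Psi a g x| ≤ C) : DPsi f g ≤ C := by
  have hbdd : BddBelow {v | ∃ b ∈ Icc (0:ℝ) 1, v = supDist f (Psi b g)} :=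
    ⟨0, by rintro v ⟨b, -, rfl⟩; exact supDist_nonneg _ _⟩
  exact (csInf_le hbdd ⟨a, ha, rfl⟩).trans (supDist_le hC h)

lemma DPsi_le_of_abs_sub_le {f g : ℝ → ℝ} (hg0 : g 0 = 0) (hg1 : g 1 = 0) {C : ℝ} (hC : 0 ≤ C)
    (h : ∀ x ∈ Icc (0:ℝ) 1, |f x - g x| ≤ C) : DPsi f g ≤ C :=
  DPsi_le_of_abs_sub_Psi_le (left_mem_Icc.2 zero_le_one) hC fun x hx => by
    rw [Psi_zero_eqOn hg0 hg1 hx]; exact h x hx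

lemma DPsi_self_Psi_eq_zero {g : ℝ → ℝ} (hg0 : g 0 = 0) (hg1 : g 1 = 0) {c : ℝ}
    (hc : c ∈ Icc (0:ℝ) 1) : DPsi g (Psi c g) = 0 := by
  have hc' : 1 - c ∈ Icc (0:ℝ) 1 := ⟨by linarith [hc.2], by linarith [hc.1]⟩
  refine le_antisymm (DPsi_le_of_abs_sub_Psi_le hc' le_rfl fun x hx => ?_) (DPsi_nonneg _ _)
  rw [Psi_Psi, sub_add_cancel, Int.fract_one, Psi_zero_eqOn hg0 hg1 hx, sub_self, abs_zero]

lemma exists_abs_sub_Psi_lt_of_DPsi_lt {f g : ℝ → ℝ} (hf : C0 f) (hg : C0 g) {ε : ℝ}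
    (h : DPsi f g < ε) : ∃ a ∈ Icc (0:ℝ) 1, ∀ x ∈ Icc (0:ℝ) 1, |f x - Psi a g x| < ε := by
  obtain ⟨_, ⟨a, ha, rfl⟩, hlt⟩ := exists_lt_of_csInf_lt
    (by exact ⟨_, 0, left_mem_Icc.2 zero_le_one, rfl⟩) h
  exact ⟨a, ha, fun x hx => (abs_sub_le_supDist hf.1 (C0_Psi hg ha).1 hx).trans_lt hlt⟩

lemma DPsi_le_DPsi_add_two_mul {f g h : ℝ → ℝ} (hf : C0 f) (hg : C0 g) (hh : C0 h) :
    DPsi f h ≤ DPsi f g + 2 * DPsi g h := by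
  refine le_of_forall_pos_le_add fun ε hε => ?_
  have hε' : 0 < ε / 3 := by positivity
  obtain ⟨a, ha, hfg⟩ := exists_abs_sub_Psi_lt_of_DPsi_lt hf hg (lt_add_of_pos_right _ hε')
  obtain ⟨b, hb, hgh⟩ := exists_abs_sub_Psi_lt_of_DPsi_lt hg hh (lt_add_of_pos_right _ hε')
  have hfh : ∀ x ∈ Icc (0:ℝ) 1, |f x - Psi (Int.fract (a + b)) h x|
      ≤ (DPsi f g + ε / 3) + 2 * (DPsi g h + ε / 3) := by
    intro x hx
    rw [← Psi_Psi]
    calc |f x - Psi a (Psi b h) x| ≤ |f x - Psi a g x| + |Psi a g x - Psi a (Psi b h) x| :=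
          abs_sub_le _ _ _
      _ ≤ (DPsi f g + ε / 3) + 2 * (DPsi g h + ε / 3) :=
          add_le_add (hfg x hx).le (abs_Psi_sub_Psi_le ha (fun y hy => (hgh y hy).le) x)
  have := DPsi_le_of_abs_sub_Psi_le (unitInterval.fract_mem _) (by positivity [DPsi_nonneg f g, DPsi_nonneg g h]) hfh
  linarith

lemma exists_shifts_close_of_DPsi_succ_lt {u : ℕ → ℝ → ℝ} (hu : ∀ k, C0 (u k)) {ε : ℕ → ℝ}
    (hε : ∀ k, DPsi (u k) (u (k + 1)) < ε k) :
    ∃ c : ℕ → ℝ, (∀ k, c k ∈ Icc (0:ℝ) 1) ∧ ∀ k, ∀ x ∈ Icc (0:ℝ) 1,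
      |Psi (c k) (u k) x - Psi (c (k + 1)) (u (k + 1)) x| ≤ 2 * ε k := by
  choose a ha hclose using fun k => exists_abs_sub_Psi_lt_of_DPsi_lt (hu k) (hu (k + 1)) (hε k)
  obtain ⟨c, hc0, hcsucc⟩ : ∃ c : ℕ → ℝ, c 0 = 0 ∧ ∀ k, c (k + 1) = Int.fract (c k + a k) :=
    ⟨fun k => Nat.rec 0 (fun k ck => Int.fract (ck + a k)) k, rfl, fun _ => rfl⟩
  have hc : ∀ k, c k ∈ Icc (0:ℝ) 1 := by
    rintro (_ | k)
    · simp [hc0]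
    · rw [hcsucc]; exact unitInterval.fract_mem _
  refine ⟨c, hc, fun k x _ => ?_⟩
  rw [hcsucc, ← Psi_Psi]
  exact abs_Psi_sub_Psi_le (hc k) (fun y hy => (hclose k y hy).le) x

lemma exists_C0_uniform_limit_of_le_geometric {w : ℕ → ℝ → ℝ} (hw : ∀ k, C0 (w k)) {C r : ℝ}
    (hr₀ : 0 ≤ r) (hr₁ : r < 1)
    (hstep : ∀ k, ∀ x ∈ Icc (0:ℝ) 1, |w k x - w (k + 1) x| ≤ C * r ^ k) :
    ∃ f, C0 f ∧ ∀ k, ∀ x ∈ Icc (0:ℝ) 1, |w k x - f x| ≤ C * r ^ k / (1 - r) := by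
  set f : ℝ → ℝ := fun x => limUnder atTop fun k => w k x
  have hlim : ∀ x ∈ Icc (0:ℝ) 1, Tendsto (fun k => w k x) atTop (𝓝 (f x)) := fun x hx =>
    (cauchySeq_of_le_geometric r C hr₁ fun k => hstep k x hx).tendsto_limUnder
  have hbound : ∀ k, ∀ x ∈ Icc (0:ℝ) 1, |w k x - f x| ≤ C * r ^ k / (1 - r) := fun k x hx =>
    dist_le_of_le_geometric_of_tendsto r C hr₁ (fun k => hstep k x hx) (hlim x hx) k
  have hunif : TendstoUniformlyOn w f atTop (Icc 0 1) := by
    rw [Metric.tendstoUniformlyOn_iff]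
    intro ε hε
    have hB : Tendsto (fun k => C * r ^ k / (1 - r)) atTop (𝓝 0) := by
      simpa using ((tendsto_pow_atTop_nhds_zero_of_lt_one hr₀ hr₁).const_mul C).div_const (1 - r)
    filter_upwards [hB.eventually (gt_mem_nhds hε)] with k hk x hx
    rw [dist_comm]
    exact (hbound k x hx).trans_lt hk
  have hend : ∀ y ∈ Icc (0:ℝ) 1, (∀ k, w k y = 0) → f y = 0 :=
    fun y hy h0 => tendsto_nhds_unique (hlim y hy) (by simp [h0])
  refine ⟨f, ⟨hunif.continuousOn (Frequently.of_forall fun k => (hw k).1), ?_, ?_⟩, hbound⟩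
  · exact hend 0 (left_mem_Icc.2 zero_le_one) fun k => (hw k).2.1
  · exact hend 1 (right_mem_Icc.2 zero_le_one) fun k => (hw k).2.2

lemma exists_C0_DPsi_le_of_DPsi_succ_lt {u : ℕ → ℝ → ℝ} (hu : ∀ k, C0 (u k))
    (hstep : ∀ k, DPsi (u k) (u (k + 1)) < 2⁻¹ ^ k) :
    ∃ f, C0 f ∧ ∀ k, DPsi (u k) f ≤ 8 * 2⁻¹ ^ k := by
  obtain ⟨c, hc, hclose⟩ := exists_shifts_close_of_DPsi_succ_lt hu hstep
  have hw : ∀ k, C0 (Psi (c k) (u k)) := fun k => C0_Psi (hu k) (hc k)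
  obtain ⟨f, hf, hwf⟩ :=
    exists_C0_uniform_limit_of_le_geometric hw (by norm_num) (by norm_num) hclose
  refine ⟨f, hf, fun k => ?_⟩
  have hwk : DPsi (Psi (c k) (u k)) f ≤ 4 * 2⁻¹ ^ k :=
    DPsi_le_of_abs_sub_le hf.2.1 hf.2.2 (by positivity) fun x hx =>
      (hwf k x hx).trans_eq (by ring)
  calc DPsi (u k) f ≤ DPsi (u k) (Psi (c k) (u k)) + 2 * DPsi (Psi (c k) (u k)) f :=
        DPsi_le_DPsi_add_two_mul (hu k) (hw k) hf
    _ ≤ 8 * 2⁻¹ ^ k := by rw [DPsi_self_Psi_eq_zero (hu k).2.1 (hu k).2.2 (hc k)]; linarith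

lemma exists_C0_tendsto_DPsi_of_cauchy {u : ℕ → ℝ → ℝ} (hu : ∀ n, C0 (u n))
    (hcauchy : ∀ ε : ℝ, 0 < ε → ∃ N : ℕ, ∀ m ≥ N, ∀ n ≥ N, DPsi (u m) (u n) < ε) :
    ∃ f, C0 f ∧ Tendsto (fun n => DPsi (u n) f) atTop (𝓝 0) := by
  choose N hN using fun k : ℕ => hcauchy (2⁻¹ ^ k) (by positivity)
  set φ : ℕ → ℕ := fun k => (Finset.range (k + 1)).sup N
  have hφ : ∀ k, N k ≤ φ k := fun k => Finset.le_sup (Finset.self_mem_range_succ k)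
  have hφ' : ∀ k, N k ≤ φ (k + 1) := fun k =>
    Finset.le_sup (Finset.mem_range.2 (Nat.lt_succ_of_lt (Nat.lt_succ_self k)))
  obtain ⟨f, hf, hφf⟩ := exists_C0_DPsi_le_of_DPsi_succ_lt (fun k => hu (φ k))
    fun k => hN k _ (hφ k) _ (hφ' k)
  refine ⟨f, hf, Metric.tendsto_atTop.2 fun ε hε => ?_⟩
  obtain ⟨k, hk⟩ : ∃ k : ℕ, (2⁻¹ : ℝ) ^ k < ε / 17 :=
    exists_pow_lt_of_lt_one (by positivity) (by norm_num)
  refine ⟨N k, fun n hn => ?_⟩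
  rw [Real.dist_eq, sub_zero, abs_of_nonneg (DPsi_nonneg _ _)]
  calc DPsi (u n) f ≤ DPsi (u n) (u (φ k)) + 2 * DPsi (u (φ k)) f :=
        DPsi_le_DPsi_add_two_mul (hu n) (hu (φ k)) hf
    _ < 2⁻¹ ^ k + 2 * (8 * 2⁻¹ ^ k) :=
        add_lt_add_of_lt_of_le (hN k n hn _ (hφ k)) (by linarith [hφf k])
    _ < ε := by linarith

lemma exists_countable_DPsi_dense :
    ∃ D : Set (ℝ → ℝ), D.Countable ∧ (∀ f ∈ D, C0 f) ∧
      ∀ f : ℝ → ℝ, C0 f → ∀ ε : ℝ, 0 < ε → ∃ g ∈ D, DPsi f g < ε := by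
  set S : Set C(Icc (0:ℝ) 1, ℝ) := {t | C0 (IccExtend zero_le_one t)}
  obtain ⟨T, hTS, hTc, hST⟩ :=
    (TopologicalSpace.IsSeparable.of_separableSpace S).exists_countable_dense_subset
  refine ⟨(fun t : C(Icc (0:ℝ) 1, ℝ) => IccExtend zero_le_one t) '' T, hTc.image _, ?_,
    fun f hf ε hε => ?_⟩
  · rintro _ ⟨t, ht, rfl⟩
    exact hTS ht
  set F : C(Icc (0:ℝ) 1, ℝ) := ⟨(Icc 0 1).domRestrict f, hf.1.domRestrict⟩
  have hF : EqOn (IccExtend zero_le_one F) f (Icc 0 1) := fun x hx => IccExtend_of_mem _ _ hx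
  have hFS : F ∈ S :=
    ⟨hf.1.congr hF, (hF (left_mem_Icc.2 zero_le_one)).trans hf.2.1,
      (hF (right_mem_Icc.2 zero_le_one)).trans hf.2.2⟩
  obtain ⟨t, htT, hFt⟩ := Metric.mem_closure_iff.1 (hST hFS) (ε / 2) (half_pos hε)
  refine ⟨_, mem_image_of_mem _ htT, ?_⟩
  have hft : ∀ x ∈ Icc (0:ℝ) 1, |f x - IccExtend zero_le_one t x| ≤ dist F t := fun x hx => by
    rw [← hF hx, IccExtend_of_mem _ _ hx, IccExtend_of_mem _ _ hx, ← Real.dist_eq]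
    exact ContinuousMap.dist_apply_le_dist _
  have := DPsi_le_of_abs_sub_le (hTS htT).2.1 (hTS htT).2.2 dist_nonneg hft
  linarith

/-- `(QC⁰[0,1], D_Ψ)` is a Polish space: separable and complete.
Separability: a countable `D_Ψ`-dense family of elements of `C⁰[0,1]`; completeness:
every `D_Ψ`-Cauchy sequence in `C⁰[0,1]` has a `D_Ψ`-limit in `C⁰[0,1]`. -/
theorem QC0_polish :
    (∃ D : Set (ℝ → ℝ), D.Countable ∧ (∀ f ∈ D, C0 f) ∧
      ∀ f : ℝ → ℝ, C0 f → ∀ ε : ℝ, 0 < ε → ∃ g ∈ D, DPsi f g < ε) ∧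
    (∀ u : ℕ → (ℝ → ℝ), (∀ n, C0 (u n)) →
      (∀ ε : ℝ, 0 < ε → ∃ N : ℕ, ∀ m ≥ N, ∀ n ≥ N, DPsi (u m) (u n) < ε) →
      ∃ f : ℝ → ℝ, C0 f ∧
        Filter.Tendsto (fun n => DPsi (u n) f) Filter.atTop (nhds 0)) :=
  ⟨exists_countable_DPsi_dense, fun _ => exists_C0_tendsto_DPsi_of_cauchy⟩
end

section
/- Let (f_n) be a sequence in C⁰[0,1] converging uniformly to f, and suppose f attains its minimum at a unique point. Then min argmin f_n → argmin f, and consequently Conj(f_n) → Conj(f) uniformly. -/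
open Set Filter

noncomputable def mf (f : ℝ → ℝ) : ℝ := sInf (f '' Set.Icc 0 1)

noncomputable def af (f : ℝ → ℝ) : ℝ := sInf {x | x ∈ Set.Icc (0:ℝ) 1 ∧ f x = mf f}

noncomputable def Conj (f : ℝ → ℝ) : ℝ → ℝ := fun x => f (Int.fract (af f + x)) - mf f

lemma img_compact {h : ℝ → ℝ} (hc : ContinuousOn h (Icc 0 1)) :
    IsCompact (h '' Icc 0 1) := isCompact_Icc.image_of_continuousOn hc

lemma mf_mem {h : ℝ → ℝ} (hc : ContinuousOn h (Icc 0 1)) : mf h ∈ h '' Icc 0 1 :=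
  (img_compact hc).sInf_mem ⟨h 0, mem_image_of_mem _ (by norm_num)⟩

lemma mf_le {h : ℝ → ℝ} (hc : ContinuousOn h (Icc 0 1)) {x : ℝ} (hx : x ∈ Icc (0:ℝ) 1) :
    mf h ≤ h x := csInf_le (img_compact hc).bddBelow (mem_image_of_mem _ hx)

lemma af_mem {h : ℝ → ℝ} (hc : ContinuousOn h (Icc 0 1)) :
    af h ∈ Icc (0:ℝ) 1 ∧ h (af h) = mf h := by
  have hS : {x | x ∈ Icc (0:ℝ) 1 ∧ h x = mf h} = Icc 0 1 ∩ h ⁻¹' {mf h} := rfl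
  have hclosed : IsClosed {x | x ∈ Icc (0:ℝ) 1 ∧ h x = mf h} := by
    rw [hS]
    exact hc.preimage_isClosed_of_isClosed isClosed_Icc isClosed_singleton
  have hne : {x | x ∈ Icc (0:ℝ) 1 ∧ h x = mf h}.Nonempty := by
    obtain ⟨x, hx, hx2⟩ := mf_mem hc
    exact ⟨x, hx, hx2⟩
  have hbdd : BddBelow {x | x ∈ Icc (0:ℝ) 1 ∧ h x = mf h} :=
    ⟨0, fun x hx => hx.1.1⟩
  exact hclosed.csInf_mem hne hbdd

lemma mf_le_add {h1 h2 : ℝ → ℝ} (hc1 : ContinuousOn h1 (Icc 0 1))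
    (hc2 : ContinuousOn h2 (Icc 0 1)) {ε : ℝ}
    (hb : ∀ x ∈ Icc (0:ℝ) 1, |h1 x - h2 x| ≤ ε) : mf h1 ≤ mf h2 + ε := by
  obtain ⟨x, hx, hx2⟩ := mf_mem hc2
  calc mf h1 ≤ h1 x := mf_le hc1 hx
    _ ≤ h2 x + ε := by have := hb x hx; rw [abs_sub_le_iff] at this; linarith [this.1]
    _ = mf h2 + ε := by rw [hx2]

/-- if `f_n → f` uniformly on `[0,1]` (all in `C⁰[0,1]`) and `f` attains its
minimum at a unique point, then `min argmin f_n → argmin f` and `Conj f_n → Conj f`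
uniformly on `[0,1]`. -/
theorem Conj_continuous_at_unique_min (f : ℝ → ℝ) (fn : ℕ → ℝ → ℝ)
    (hfc : ContinuousOn f (Set.Icc 0 1)) (hf0 : f 0 = 0) (hf1 : f 1 = 0)
    (hfnc : ∀ n, ContinuousOn (fn n) (Set.Icc 0 1))
    (hfn0 : ∀ n, fn n 0 = 0) (hfn1 : ∀ n, fn n 1 = 0)
    (hconv : TendstoUniformlyOn fn f Filter.atTop (Set.Icc 0 1))
    (huniq : ∃! x : ℝ, x ∈ Set.Icc (0:ℝ) 1 ∧ f x = mf f) :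
    Filter.Tendsto (fun n => af (fn n)) Filter.atTop (nhds (af f)) ∧
    TendstoUniformlyOn (fun n => Conj (fn n)) (Conj f) Filter.atTop (Set.Icc 0 1) := by
  have hafm := af_mem hfc
  set a := af f
  obtain ⟨x0, hx0, hx0u⟩ := huniq
  have hax0 : a = x0 := hx0u a hafm
  have hconv' := Metric.tendstoUniformlyOn_iff.1 hconv
  -- Part 1: af (fn n) → a
  have part1 : Filter.Tendsto (fun n => af (fn n)) Filter.atTop (nhds a) := by
    rw [Metric.tendsto_nhds]
    intro ε hε
    set K := Icc (0:ℝ) 1 ∩ {x | ε ≤ |x - a|} with hK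
    have hKc : IsCompact K := isCompact_Icc.inter_right
      (isClosed_le continuous_const ((continuous_id.sub continuous_const).abs))
    by_cases hKne : K.Nonempty
    · obtain ⟨z, hzK, hz⟩ := hKc.exists_isMinOn hKne (hfc.mono inter_subset_left)
      have hz1 : mf f ≤ f z := mf_le hfc hzK.1
      have hzlt : mf f < f z := by
        rcases lt_or_eq_of_le hz1 with h | h
        · exact h
        · exfalso
          have : z = x0 := hx0u z ⟨hzK.1, h.symm⟩
          have : z = a := by rw [this, hax0]
          have h2 := hzK.2
          simp only [mem_setOf_eq, this, sub_self, abs_zero] at h2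
          linarith
      set δ := f z - mf f with hδ
      have hδpos : 0 < δ := by linarith
      filter_upwards [hconv' (δ/3) (by linarith)] with n hn
      have hnle : ∀ x ∈ Icc (0:ℝ) 1, |fn n x - f x| ≤ δ/3 := by
        intro x hx
        have := hn x hx
        rw [Real.dist_eq, abs_sub_comm] at this
        linarith [le_of_lt this]
      have hnle' : ∀ x ∈ Icc (0:ℝ) 1, |f x - fn n x| ≤ δ/3 := fun x hx => by
        rw [abs_sub_comm]; exact hnle x hx
      obtain ⟨hbm, hbv⟩ := af_mem (hfnc n)
      set b := af (fn n)
      have h1 : f b ≤ fn n b + δ/3 := by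
        have := hnle' b hbm; rw [abs_sub_le_iff] at this; linarith [this.1]
      have h2 : mf (fn n) ≤ mf f + δ/3 := mf_le_add (hfnc n) hfc hnle
      have h3 : f b < mf f + δ := by rw [hbv] at h1; linarith
      have hbK : b ∉ K := by
        intro hbK
        have := hz hbK
        simp only [IsMinOn, IsMinFilter] at this
        have : f z ≤ f b := hz hbK
        linarith
      rw [hK, mem_inter_iff, not_and_or] at hbK
      rcases hbK with h | h
      · exact absurd hbm h
      · simp only [mem_setOf_eq, not_le] at h
        rwa [Real.dist_eq]
    · push_neg at hKne
      filter_upwards with n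
      have hbm := (af_mem (hfnc n)).1
      have : af (fn n) ∉ K := by rw [hKne]; exact notMem_empty _
      rw [hK, mem_inter_iff, not_and_or] at this
      rcases this with h | h
      · exact absurd hbm h
      · simp only [mem_setOf_eq, not_le] at h
        rwa [Real.dist_eq]
  refine ⟨part1, ?_⟩
  -- Part 2: uniform convergence of Conj
  set g : ℝ → ℝ := f ∘ Int.fract with hg
  have hgc : Continuous g := ContinuousOn.comp_fract'' hfc (by rw [hf0, hf1])
  have hgu : UniformContinuousOn g (Icc (-1:ℝ) 2) :=
    isCompact_Icc.uniformContinuousOn_of_continuous hgc.continuousOn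
  rw [Metric.tendstoUniformlyOn_iff]
  intro ε hε
  rw [Metric.uniformContinuousOn_iff] at hgu
  obtain ⟨δ, hδpos, hδ⟩ := hgu (ε/3) (by linarith)
  have hev1 : ∀ᶠ n in atTop, dist (af (fn n)) a < δ :=
    (Metric.tendsto_nhds.1 part1) δ hδpos
  filter_upwards [hev1, hconv' (ε/6) (by linarith)] with n hn1 hn2
  intro x hx
  obtain ⟨hbm, _⟩ := af_mem (hfnc n)
  set b := af (fn n)
  have hmemA : a + x ∈ Icc (-1:ℝ) 2 := by
    constructor <;> [linarith [hafm.1.1, hx.1]; linarith [hafm.1.2, hx.2]]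
  have hmemB : b + x ∈ Icc (-1:ℝ) 2 := by
    constructor <;> [linarith [hbm.1, hx.1]; linarith [hbm.2, hx.2]]
  have hdistab : dist (a + x) (b + x) < δ := by
    rw [Real.dist_eq] at hn1 ⊢
    rw [abs_sub_comm] at hn1
    simpa using hn1
  have hT1 : |g (a + x) - g (b + x)| < ε/3 := by
    have := hδ (a+x) hmemA (b+x) hmemB hdistab
    rwa [Real.dist_eq] at this
  have hfractb : Int.fract (b + x) ∈ Icc (0:ℝ) 1 :=
    ⟨Int.fract_nonneg _, le_of_lt (Int.fract_lt_one _)⟩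
  have hT2 : |f (Int.fract (b + x)) - fn n (Int.fract (b + x))| < ε/6 := by
    have := hn2 _ hfractb
    rwa [Real.dist_eq] at this
  have hnle : ∀ y ∈ Icc (0:ℝ) 1, |fn n y - f y| ≤ ε/6 := by
    intro y hy
    have := hn2 y hy
    rw [Real.dist_eq, abs_sub_comm] at this
    linarith [le_of_lt this]
  have hnle' : ∀ y ∈ Icc (0:ℝ) 1, |f y - fn n y| ≤ ε/6 := fun y hy => by
    rw [abs_sub_comm]; exact hnle y hy
  have hT3a : mf (fn n) ≤ mf f + ε/6 := mf_le_add (hfnc n) hfc hnle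
  have hT3b : mf f ≤ mf (fn n) + ε/6 := mf_le_add hfc (hfnc n) hnle'
  have hT3 : |mf f - mf (fn n)| ≤ ε/6 := abs_sub_le_iff.2 ⟨by linarith, by linarith⟩
  rw [Real.dist_eq]
  have hexp : Conj f x - Conj (fn n) x =
      (g (a + x) - g (b + x)) + (f (Int.fract (b + x)) - fn n (Int.fract (b + x)))
      + (mf (fn n) - mf f) := by
    simp only [Conj, hg, Function.comp_apply]
    ring
  rw [hexp]
  calc |(g (a + x) - g (b + x)) + (f (Int.fract (b + x)) - fn n (Int.fract (b + x)))
      + (mf (fn n) - mf f)|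
      ≤ |g (a + x) - g (b + x)| + |f (Int.fract (b + x)) - fn n (Int.fract (b + x))|
        + |mf (fn n) - mf f| := by
        exact (abs_add_le _ _).trans (by gcongr; exact abs_add_le _ _)
    _ < ε := by rw [abs_sub_comm (mf (fn n))] at *; linarith
end

section
/- For a planar tree T with nodes u_0, ..., u_{‖T‖} listed in lexicographic order, the index of the first visit of u_k by the depth-first traversal satisfies m_T(k) = 2k − H_T(k) for all k ∈ {0,...,‖T‖}, where H_T(k) = |u_k| is the height of u_k. -/
/-- A rooted planar tree: a finite, prefix-closed set of words on `ℕ` containing the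
empty word, closed under taking smaller siblings. -/
def IsPlanarTree (T : Finset (List ℕ)) : Prop :=
  ([] ∈ T) ∧
  (∀ u ∈ T, ∀ v : List ℕ, v <+: u → v ∈ T) ∧
  (∀ (u : List ℕ) (i : ℕ), u ++ [i] ∈ T → ∀ j < i, u ++ [j] ∈ T)

/-- The `k`-th vertex of `T` in lexicographic order. -/
noncomputable def vtx (T : Finset (List ℕ)) (k : ℕ) : List ℕ :=
  (T.sort (· ≤ ·)).getD k []

/-- The height sequence: `HT T k` is the depth of the `k`-th vertex in lex. order. -/
noncomputable def HT (T : Finset (List ℕ)) (k : ℕ) : ℕ := (vtx T k).length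

/-- `c : ℕ → List ℕ` is the depth-first traversal of `T`: it starts at the root; from
the current vertex it moves to the lexicographically smallest unvisited child if any,
and otherwise back to the parent. -/
def IsDFS (T : Finset (List ℕ)) (c : ℕ → List ℕ) : Prop :=
  c 0 = [] ∧
  ∀ j : ℕ, j < 2 * (T.card - 1) →
    (((∃ v ∈ T, (∃ i : ℕ, v = c j ++ [i]) ∧ ∀ i ≤ j, c i ≠ v) →
        (c (j+1) ∈ T ∧ (∃ i : ℕ, c (j+1) = c j ++ [i]) ∧ (∀ i ≤ j, c i ≠ c (j+1)) ∧
          ∀ v ∈ T, (∃ i : ℕ, v = c j ++ [i]) → (∀ i ≤ j, c i ≠ v) → c (j+1) ≤ v)) ∧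
     ((¬ ∃ v ∈ T, (∃ i : ℕ, v = c j ++ [i]) ∧ ∀ i ≤ j, c i ≠ v) →
        c (j+1) = (c j).dropLast))

/-- `mT T c k` : the first visit time of the `k`-th vertex (in lex. order) by the
depth-first traversal `c`. -/
noncomputable def mT (T : Finset (List ℕ)) (c : ℕ → List ℕ) (k : ℕ) : ℕ :=
  sInf {j : ℕ | c j = vtx T k}

/-! The traversal reaches the vertices for the first time in lexicographic order. If `u'` is the
lexicographic successor of `u` in `T`, the parent `w` of `u'` is an ancestor of `u`, and every
vertex extending a strict descendant of `w` on the path to `u` is `≤ u`, hence already visited.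
So after its first visit of `u` the traversal climbs `|u| - |w|` steps up to `w` and then steps
down to `u'`; the time thus grows by `|u| - |u'| + 2`, and `m + |u|` by exactly `2`. -/

namespace List

variable {α : Type*}

theorem append_cons_lt_append_singleton_iff [Preorder α] (w s : List α) (b i : α) :
    w ++ b :: s < w ++ [i] ↔ b < i := by
  induction w with
  | nil => simp [cons_lt_cons_iff]
  | cons a w ih => simpa [cons_lt_cons_iff] using ih

theorem IsPrefix.lt_append_singleton [Preorder α] {w p u v : List α} {i : α} (hwp : w <+: p)
    (hlen : w.length < p.length) (hpu : p <+: u) (hpv : p <+: v) (hu : u < w ++ [i]) :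
    v < w ++ [i] := by
  obtain ⟨_ | ⟨b, r⟩, rfl⟩ := hwp
  · simp at hlen
  obtain ⟨s, rfl⟩ := hpu
  obtain ⟨s', rfl⟩ := hpv
  simp only [append_assoc, cons_append, append_cons_lt_append_singleton_iff] at hu ⊢
  exact hu

theorem prefix_of_le_of_lt_append_singleton [LinearOrder α] :
    ∀ {w u : List α} {i : α}, w ≤ u → u < w ++ [i] → w <+: u
  | [], _, _, _, _ => nil_prefix
  | _ :: _, [], _, hle, _ => absurd (nil_lt_cons _ _) (not_lt.mpr hle)
  | a :: w, b :: u, i, hle, hlt => by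
    rw [← not_lt] at hle
    rw [cons_append, cons_lt_cons_iff] at hlt
    rw [cons_lt_cons_iff] at hle
    obtain hba | ⟨rfl, hlt⟩ := hlt
    · exact absurd (Or.inl hba) hle
    · have hwu : w ≤ u := not_lt.mp fun h => hle (Or.inr ⟨rfl, h⟩)
      exact cons_prefix_cons.mpr ⟨rfl, prefix_of_le_of_lt_append_singleton hwu hlt⟩

theorem dropLast_lt [Preorder α] {l : List α} (hl : l ≠ []) : l.dropLast < l := by
  conv_rhs => rw [← dropLast_append_getLast hl]
  simpa using append_left_lt (l₁ := l.dropLast) (nil_lt_cons (l.getLast hl) [])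

theorem dropLast_prefix_of_lt [LinearOrder α] {u u' : List α} (huu' : u < u')
    (hle : u'.dropLast ≤ u) : u'.dropLast <+: u := by
  have hne : u' ≠ [] := by rintro rfl; exact not_lt_nil u huu'
  rw [← dropLast_append_getLast hne] at huu'
  exact prefix_of_le_of_lt_append_singleton hle huu'

end List

section vtx

variable {T : Finset (List ℕ)} {k k' : ℕ}

theorem vtx_eq_orderEmbOfFin (hk : k < T.card) : vtx T k = T.orderEmbOfFin rfl ⟨k, hk⟩ := by
  rw [Finset.orderEmbOfFin_apply]
  exact List.getD_eq_getElem _ _ _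

theorem vtx_mem (hk : k < T.card) : vtx T k ∈ T := by
  rw [vtx_eq_orderEmbOfFin hk]
  exact Finset.orderEmbOfFin_mem _ _ _

theorem vtx_lt_vtx_iff (hk : k < T.card) (hk' : k' < T.card) :
    vtx T k < vtx T k' ↔ k < k' := by
  rw [vtx_eq_orderEmbOfFin hk, vtx_eq_orderEmbOfFin hk', OrderEmbedding.lt_iff_lt, Fin.mk_lt_mk]

theorem exists_vtx_eq {v : List ℕ} (hv : v ∈ T) : ∃ k < T.card, vtx T k = v := by
  have : v ∈ Set.range (T.orderEmbOfFin rfl) := by simpa using hv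
  obtain ⟨⟨k, hk⟩, rfl⟩ := this
  exact ⟨k, hk, vtx_eq_orderEmbOfFin hk⟩

theorem le_vtx_of_lt_vtx_succ {v : List ℕ} (hv : v ∈ T) (hk : k + 1 < T.card)
    (hlt : v < vtx T (k + 1)) : v ≤ vtx T k := by
  obtain ⟨j, hj, rfl⟩ := exists_vtx_eq hv
  rw [vtx_lt_vtx_iff hj hk] at hlt
  rcases (Nat.lt_succ_iff.mp hlt).eq_or_lt with rfl | hjk
  · exact le_rfl
  · exact ((vtx_lt_vtx_iff hj (by omega)).mpr hjk).le

theorem vtx_zero (hT : [] ∈ T) : vtx T 0 = [] := by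
  obtain ⟨j, hj, hvj⟩ := exists_vtx_eq hT
  refine List.le_nil.mp (List.not_lt.mp ?_)
  rw [← hvj, vtx_lt_vtx_iff hj (by omega)]
  exact Nat.not_lt_zero j

end vtx

structure IsLexFirstVisit (T : Finset (List ℕ)) (c : ℕ → List ℕ) (u : List ℕ) (m : ℕ) :
    Prop where
  apply_eq : c m = u
  apply_lt : ∀ i < m, c i < u
  exists_apply_eq : ∀ v ∈ T, v ≤ u → ∃ i ≤ m, c i = v

section DFS

variable {T : Finset (List ℕ)} {c : ℕ → List ℕ} {u u' v : List ℕ} {j m : ℕ}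

theorem IsLexFirstVisit.sInf_eq (h : IsLexFirstVisit T c u m) : sInf {j | c j = u} = m :=
  le_antisymm (Nat.sInf_le h.apply_eq)
    (le_csInf ⟨m, h.apply_eq⟩ fun _ hj => not_lt.mp fun hjm => (h.apply_lt _ hjm).ne hj)

theorem IsLexFirstVisit.apply_le (h : IsLexFirstVisit T c u m) {i : ℕ} (hi : i ≤ m) :
    c i ≤ u := by
  rcases hi.lt_or_eq with hi | rfl
  · exact (h.apply_lt i hi).le
  · exact h.apply_eq.le

theorem IsDFS.apply_succ_eq_dropLast (hc : IsDFS T c) (hj : j < 2 * (T.card - 1))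
    (hvis : ∀ i, c j ++ [i] ∈ T → ∃ i' ≤ j, c i' = c j ++ [i]) :
    c (j + 1) = (c j).dropLast := by
  refine (hc.2 j hj).2 ?_
  rintro ⟨_, hvT, ⟨i, rfl⟩, hunv⟩
  obtain ⟨i', hi', hci'⟩ := hvis i hvT
  exact hunv i' hi' hci'

theorem IsDFS.apply_succ_eq_of_forall_lt (hc : IsDFS T c) (hj : j < 2 * (T.card - 1))
    (hv : v ∈ T) (hchild : ∃ i, v = c j ++ [i]) (hunv : ∀ i ≤ j, c i ≠ v)
    (hvis : ∀ x ∈ T, x < v → ∃ i ≤ j, c i = x) : c (j + 1) = v := by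
  obtain ⟨hmem, -, hunv', hmin⟩ := (hc.2 j hj).1 ⟨v, hv, hchild, hunv⟩
  refine (hmin v hv hchild hunv).eq_of_not_lt fun hlt => ?_
  obtain ⟨i, hi, hci⟩ := hvis _ hmem hlt
  exact hunv' i hi hci

theorem IsDFS.apply_add_eq_take (hc : IsDFS T c) {d : ℕ} (hcm : c m = u)
    (hd : m + d ≤ 2 * (T.card - 1))
    (hvis : ∀ t < d, ∀ i, u.take (u.length - t) ++ [i] ∈ T →
      ∃ i' ≤ m + t, c i' = u.take (u.length - t) ++ [i]) :
    ∀ t ≤ d, c (m + t) = u.take (u.length - t)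
  | 0, _ => by simpa using hcm
  | t + 1, ht => by
    have hct := hc.apply_add_eq_take hcm hd hvis t (by omega)
    rw [← add_assoc, hc.apply_succ_eq_dropLast (by omega) (hct ▸ hvis t (by omega)), hct,
      List.dropLast_eq_take, List.take_take, List.length_take]
    congr 1
    omega

theorem IsLexFirstVisit.exists_next (hc : IsDFS T c) (h : IsLexFirstVisit T c u m)
    (hu' : u' ∈ T) (hparent : u'.dropLast ∈ T) (huu' : u < u')
    (hnext : ∀ v ∈ T, v < u' → v ≤ u) (hm : m + u.length < 2 * (T.card - 1)) :
    ∃ m', m' + u'.length = m + u.length + 2 ∧ IsLexFirstVisit T c u' m' := by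
  set w := u'.dropLast
  have hne : u' ≠ [] := by rintro rfl; exact List.not_lt_nil u huu'
  have hu'w : u' = w ++ [u'.getLast hne] := (List.dropLast_append_getLast hne).symm
  have hwu : w <+: u := List.dropLast_prefix_of_lt huu' (hnext w hparent (List.dropLast_lt hne))
  have hlen : w.length ≤ u.length := hwu.length_le
  have hclimb := hc.apply_add_eq_take (d := u.length - w.length) h.apply_eq (by omega)
    fun t ht i hi => by
      have hp : w <+: u.take (u.length - t) := List.prefix_take_iff.mpr ⟨hwu, by omega⟩
      have hlt := hp.lt_append_singleton (by simp; omega) (List.take_prefix _ _)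
        (List.prefix_append _ [i]) (hu'w ▸ huu')
      obtain ⟨i', hi', hci'⟩ := h.exists_apply_eq _ hi (hnext _ hi (hu'w ▸ hlt))
      exact ⟨i', by omega, hci'⟩
  have hcw : c (m + (u.length - w.length)) = w := by
    rw [hclimb _ le_rfl, show u.length - (u.length - w.length) = w.length by omega]
    exact (List.prefix_iff_eq_take.mp hwu).symm
  have hle : ∀ i ≤ m + (u.length - w.length), c i ≤ u := fun i hi => by
    rcases le_or_gt i m with him | him
    · exact h.apply_le him
    · rw [← Nat.add_sub_cancel' him.le, hclimb _ (by omega)]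
      exact not_lt.mp (List.take_prefix _ _).le
  have hcu' := hc.apply_succ_eq_of_forall_lt (by omega) hu' ⟨_, hcw ▸ hu'w⟩
    (fun i hi hci => not_lt_of_ge (hle i hi) (hci ▸ huu'))
    fun x hx hxu' =>
      (h.exists_apply_eq x hx (hnext x hx hxu')).imp fun _ ⟨hi, hci⟩ => ⟨by omega, hci⟩
  refine ⟨m + (u.length - w.length) + 1, ?_, hcu',
    fun i hi => (hle i (by omega)).trans_lt huu', ?_⟩
  · have := List.length_pos_of_ne_nil hne
    simp only [w, List.length_dropLast] at hlen ⊢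
    omega
  · intro v hv hvu'
    rcases hvu'.lt_or_eq with hvu' | rfl
    · obtain ⟨i, hi, hci⟩ := h.exists_apply_eq v hv (hnext v hv hvu')
      exact ⟨i, by omega, hci⟩
    · exact ⟨_, le_rfl, hcu'⟩

end DFS

theorem exists_isLexFirstVisit_vtx {T : Finset (List ℕ)} (hT : IsPlanarTree T)
    {c : ℕ → List ℕ} (hc : IsDFS T c) :
    ∀ k < T.card, ∃ m, m + (vtx T k).length = 2 * k ∧ IsLexFirstVisit T c (vtx T k) m
  | 0, _ => by
    refine ⟨0, by simp [vtx_zero hT.1], ?_⟩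
    rw [vtx_zero hT.1]
    refine ⟨hc.1, fun _ hi => absurd hi (Nat.not_lt_zero _), fun v _ hv => ⟨0, le_rfl, ?_⟩⟩
    rw [hc.1, List.le_nil.mp (List.not_lt.mp (not_lt.mpr hv))]
  | k + 1, hk => by
    obtain ⟨m, hm, h⟩ := exists_isLexFirstVisit_vtx hT hc k (by omega)
    have hu' := vtx_mem hk
    obtain ⟨m', hm', h'⟩ := h.exists_next hc hu' (hT.2.1 _ hu' _ (List.dropLast_prefix _))
      ((vtx_lt_vtx_iff (by omega) hk).mpr k.lt_succ_self)
      (fun _ hv => le_vtx_of_lt_vtx_succ hv hk) (by omega)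
    exact ⟨m', by omega, h'⟩

/-- for a planar tree `T` and its depth-first traversal `c`, the first
visit time of the `k`-th vertex satisfies `m_T(k) = 2k - H_T(k)`. -/
theorem first_visit_time (T : Finset (List ℕ)) (hT : IsPlanarTree T)
    (c : ℕ → List ℕ) (hc : IsDFS T c) (k : ℕ) (hk : k ≤ T.card - 1) :
    mT T c k + HT T k = 2 * k := by
  have hcard : 0 < T.card := Finset.card_pos.mpr ⟨[], hT.1⟩
  obtain ⟨m, hm, h⟩ := exists_isLexFirstVisit_vtx hT hc k (by omega)
  rw [mT, h.sInf_eq]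
  exact hm
end

section
/- Let (S_k) be a simple random walk with i.i.d. increments uniform on {−1,+1} started at 0. There exists a finite constant c such that for every n and every event A measurable with respect to (S_0,...,S_{n+1}), P(A | S_{2n+1} = −1) ≤ c·P(A). -/
/-!
The event `A` depends only on `X 0, …, X n`, while `S (2n+1) = S (n+1) + T` with
`T = X (n+1) + ⋯ + X (2n)` independent of `X 0, …, X n`. Conditioning on the value of `S (n+1)`
gives `P(A ∩ {S (2n+1) = -1}) ≤ P(A) · maxₖ P(T = k) ≤ P(A) · C(n, ⌊n/2⌋) 2⁻ⁿ`, whereas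
`P(S (2n+1) = -1) = C(2n+1, n) 2⁻⁽²ⁿ⁺¹⁾`. So `c = 2` works as soon as
`2ⁿ C(n, ⌊n/2⌋) ≤ C(2n+1, n)`, an elementary replacement for Stirling's formula (both sides are
of order `4ⁿ/√n`).
-/

open MeasureTheory ProbabilityTheory Finset
open scoped ENNReal

namespace Nat

theorem centralBinom_succ_eq_two_mul_choose (n : ℕ) :
    centralBinom (n + 1) = 2 * (2 * n + 1).choose n := by
  rw [centralBinom_eq_two_mul_choose, show 2 * (n + 1) = 2 * n + 1 + 1 by ring, choose_succ_succ,
    choose_symm_half]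
  ring

/-- Each step `m → m + 1` multiplies the ratio of the two sides by
`(4m+3)(4m+5) / ((4m+2)(4m+6)) ≥ 1`. -/
theorem two_pow_mul_centralBinom_le_centralBinom_two_mul_add_one (m : ℕ) :
    2 ^ (2 * m + 1) * centralBinom m ≤ centralBinom (2 * m + 1) := by
  induction m with
  | zero => simp [centralBinom_eq_two_mul_choose]
  | succ m ih =>
    have h₁ := succ_mul_centralBinom_succ m
    have h₂ := succ_mul_centralBinom_succ (2 * m + 1)
    have h₃ := succ_mul_centralBinom_succ (2 * m + 2)
    refine le_of_mul_le_mul_left ?_ (show 0 < (m + 1) * (2 * m + 2) * (2 * m + 3) by positivity)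
    calc (m + 1) * (2 * m + 2) * (2 * m + 3) * (2 ^ (2 * (m + 1) + 1) * centralBinom (m + 1))
        = 8 * (2 * m + 1) * (2 * m + 2) * (2 * m + 3) * (2 ^ (2 * m + 1) * centralBinom m) := by
          linear_combination 4 * (2 * m + 2) * (2 * m + 3) * 2 ^ (2 * m + 1) * h₁
      _ ≤ 8 * (2 * m + 1) * (2 * m + 2) * (2 * m + 3) * centralBinom (2 * m + 1) := by gcongr
      _ ≤ 4 * (m + 1) * (4 * m + 3) * (4 * m + 5) * centralBinom (2 * m + 1) :=
          Nat.mul_le_mul_right _ (by nlinarith)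
      _ = (m + 1) * (2 * m + 2) * (2 * m + 3) * centralBinom (2 * (m + 1) + 1) := by
          rw [show 2 * (m + 1) + 1 = 2 * m + 2 + 1 by ring]
          linear_combination
            (m + 1) * 2 * (4 * m + 5) * h₂.symm + (m + 1) * (2 * m + 2) * h₃.symm

theorem two_pow_mul_centralBinom_succ_le_centralBinom_two_mul_add_two (m : ℕ) :
    2 ^ (2 * m + 1) * centralBinom (m + 1) ≤ centralBinom (2 * m + 2) := by
  have h₁ := succ_mul_centralBinom_succ m
  have h₂ := succ_mul_centralBinom_succ (2 * m + 1)
  refine le_of_mul_le_mul_left ?_ (show 0 < (m + 1) * (2 * m + 2) by positivity)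
  calc (m + 1) * (2 * m + 2) * (2 ^ (2 * m + 1) * centralBinom (m + 1))
      = 2 * (2 * m + 1) * (2 * m + 2) * (2 ^ (2 * m + 1) * centralBinom m) := by
        linear_combination (2 * m + 2) * 2 ^ (2 * m + 1) * h₁
    _ ≤ 2 * (2 * m + 1) * (2 * m + 2) * centralBinom (2 * m + 1) := by
        gcongr; exact two_pow_mul_centralBinom_le_centralBinom_two_mul_add_one m
    _ ≤ 2 * (m + 1) * (4 * m + 3) * centralBinom (2 * m + 1) :=
        Nat.mul_le_mul_right _ (by nlinarith)
    _ = (m + 1) * (2 * m + 2) * centralBinom (2 * m + 2) := by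
        linear_combination (m + 1) * h₂.symm

theorem two_pow_succ_mul_choose_half_le_centralBinom_succ (n : ℕ) :
    2 ^ (n + 1) * n.choose (n / 2) ≤ centralBinom (n + 1) := by
  obtain ⟨m, rfl | rfl⟩ := n.even_or_odd'
  · rw [Nat.mul_div_cancel_left m two_pos, ← centralBinom_eq_two_mul_choose]
    exact two_pow_mul_centralBinom_le_centralBinom_two_mul_add_one m
  · rw [show (2 * m + 1) / 2 = m by omega, pow_succ', mul_assoc, mul_left_comm,
      ← centralBinom_succ_eq_two_mul_choose]
    exact two_pow_mul_centralBinom_succ_le_centralBinom_two_mul_add_two m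

end Nat

theorem ENNReal.choose_half_mul_inv_two_pow_le_two_mul (n : ℕ) :
    (n.choose (n / 2) : ℝ≥0∞) * 2⁻¹ ^ n ≤ 2 * ((2 * n + 1).choose n * 2⁻¹ ^ (2 * n + 1)) := by
  have hcancel : (2 : ℝ≥0∞) ^ (n + 1) * 2⁻¹ ^ (n + 1) = 1 := by
    rw [← mul_pow, ENNReal.mul_inv_cancel two_ne_zero ENNReal.ofNat_ne_top, one_pow]
  have hkey :
      ((2 ^ (n + 1) * n.choose (n / 2) : ℕ) : ℝ≥0∞) ≤ (2 * (2 * n + 1).choose n : ℕ) := by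
    rw [← Nat.centralBinom_succ_eq_two_mul_choose]
    exact_mod_cast Nat.two_pow_succ_mul_choose_half_le_centralBinom_succ n
  push_cast at hkey
  calc (n.choose (n / 2) : ℝ≥0∞) * 2⁻¹ ^ n
      = (2 ^ (n + 1) * 2⁻¹ ^ (n + 1)) * n.choose (n / 2) * 2⁻¹ ^ n := by
        rw [hcancel, one_mul]
    _ = (2 ^ (n + 1) * n.choose (n / 2)) * 2⁻¹ ^ (2 * n + 1) := by ring
    _ ≤ (2 * (2 * n + 1).choose n) * 2⁻¹ ^ (2 * n + 1) := by gcongr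
    _ = 2 * ((2 * n + 1).choose n * 2⁻¹ ^ (2 * n + 1)) := by ring

theorem ae_eq_one_or_eq_neg_one {Ω : Type*} [MeasurableSpace Ω] {μ : Measure Ω}
    [IsProbabilityMeasure μ] {Y : Ω → ℤ} (hY : Measurable Y)
    (hup : μ {ω | Y ω = 1} = 1 / 2) (hdown : μ {ω | Y ω = -1} = 1 / 2) :
    ∀ᵐ ω ∂μ, Y ω = 1 ∨ Y ω = -1 := by
  have hdisj : Disjoint {ω | Y ω = 1} {ω | Y ω = -1} :=
    Set.disjoint_left.mpr fun ω h₁ h₂ => by simp_all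
  refine (ae_iff_measure_eq ?_).mpr ?_
  · exact ((hY (measurableSet_singleton _)).union
      (hY (measurableSet_singleton _))).nullMeasurableSet
  rw [Set.ofPred_or, measure_union hdisj (hY (measurableSet_singleton _)), hup, hdown,
    ENNReal.add_halves, measure_univ]

section SignPattern

variable {ι Ω : Type*} [DecidableEq ι] {X : ι → Ω → ℤ} {s t : Finset ι} {ω : Ω}

def signPattern (X : ι → Ω → ℤ) (s t : Finset ι) : Set Ω :=
  ⋂ i ∈ s, X i ⁻¹' {if i ∈ t then 1 else -1}

theorem eq_filter_of_mem_signPattern (hts : t ⊆ s) (hω : ω ∈ signPattern X s t) :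
    t = {i ∈ s | X i ω = 1} := by
  ext i
  have hX := Set.mem_iInter₂.mp hω i
  by_cases hi : i ∈ t
  · simpa [hi, hts hi] using hX (hts hi)
  · by_cases his : i ∈ s
    · have := hX his
      simp_all
    · simp [hi, his]

theorem sum_eq_of_mem_signPattern (hts : t ⊆ s) (hω : ω ∈ signPattern X s t) :
    ∑ i ∈ s, X i ω = 2 * #t - #s := by
  rw [sum_congr rfl fun i hi => Set.mem_iInter₂.mp hω i hi, ← sum_sdiff hts,
    sum_congr rfl fun i hi => if_neg (mem_sdiff.mp hi).2, sum_congr rfl fun i hi => if_pos hi,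
    sum_const, sum_const, card_sdiff_of_subset hts]
  have := card_le_card hts
  simp only [nsmul_eq_mul, mul_one, mul_neg_one]
  omega

variable [MeasurableSpace Ω] {μ : Measure Ω}

theorem measurableSet_signPattern (hmeas : ∀ i, Measurable (X i)) (s t : Finset ι) :
    MeasurableSet (signPattern X s t) :=
  s.measurableSet_biInter fun i _ => hmeas i (measurableSet_singleton _)

theorem measure_signPattern (hindep : iIndepFun X μ)
    (hup : ∀ i, μ {ω | X i ω = 1} = 1 / 2) (hdown : ∀ i, μ {ω | X i ω = -1} = 1 / 2)
    (s t : Finset ι) : μ (signPattern X s t) = 2⁻¹ ^ #s := by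
  rw [signPattern, hindep.meas_biInter fun i _ => ⟨_, measurableSet_singleton _, rfl⟩,
    prod_congr rfl fun i _ => ?_, prod_const]
  split_ifs
  · exact (hup i).trans (one_div 2)
  · exact (hdown i).trans (one_div 2)

theorem ae_mem_signPattern_filter [IsProbabilityMeasure μ] (hmeas : ∀ i, Measurable (X i))
    (hup : ∀ i, μ {ω | X i ω = 1} = 1 / 2) (hdown : ∀ i, μ {ω | X i ω = -1} = 1 / 2)
    (s : Finset ι) : ∀ᵐ ω ∂μ, ω ∈ signPattern X s {i ∈ s | X i ω = 1} := by
  filter_upwards [(Filter.eventually_all_finset s).mpr fun i _ =>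
    ae_eq_one_or_eq_neg_one (hmeas i) (hup i) (hdown i)] with ω hω
  refine Set.mem_iInter₂.mpr fun i hi => ?_
  rcases hω i hi with h | h <;> simp [hi, h]

theorem measure_sum_eq_eq_card_mul [IsProbabilityMeasure μ]
    (hmeas : ∀ i, Measurable (X i)) (hindep : iIndepFun X μ)
    (hup : ∀ i, μ {ω | X i ω = 1} = 1 / 2) (hdown : ∀ i, μ {ω | X i ω = -1} = 1 / 2)
    (s : Finset ι) (j : ℤ) :
    μ {ω | ∑ i ∈ s, X i ω = j} = #{t ∈ s.powerset | 2 * (#t : ℤ) - #s = j} * 2⁻¹ ^ #s := by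
  set F := {t ∈ s.powerset | 2 * (#t : ℤ) - #s = j}
  have hF : ∀ {t}, t ∈ F ↔ t ⊆ s ∧ 2 * (#t : ℤ) - #s = j := by simp [F]
  have hae : {ω | ∑ i ∈ s, X i ω = j} =ᵐ[μ] ⋃ t ∈ F, signPattern X s t := by
    filter_upwards [ae_mem_signPattern_filter hmeas hup hdown s] with ω hω
    change (∑ i ∈ s, X i ω = j) = (ω ∈ ⋃ t ∈ F, signPattern X s t)
    rw [Set.mem_iUnion₂, eq_iff_iff]
    refine ⟨fun hj => ⟨_, hF.mpr ⟨filter_subset _ _, ?_⟩, hω⟩, ?_⟩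
    · rw [← sum_eq_of_mem_signPattern (filter_subset _ _) hω, hj]
    · rintro ⟨t, ht, hωt⟩
      exact (sum_eq_of_mem_signPattern (hF.mp ht).1 hωt).trans (hF.mp ht).2
  have hdisj : (F : Set (Finset ι)).PairwiseDisjoint (signPattern X s) := by
    intro t ht t' ht' hne
    refine Set.disjoint_left.mpr fun ω hωt hωt' => hne ?_
    rw [eq_filter_of_mem_signPattern (hF.mp ht).1 hωt,
      eq_filter_of_mem_signPattern (hF.mp ht').1 hωt']
  rw [measure_congr hae,
    measure_biUnion_finset hdisj fun t _ => measurableSet_signPattern hmeas s t,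
    sum_congr rfl fun t _ => measure_signPattern hindep hup hdown s t, sum_const, nsmul_eq_mul]

theorem measure_sum_eq_le_choose_half_mul [IsProbabilityMeasure μ]
    (hmeas : ∀ i, Measurable (X i)) (hindep : iIndepFun X μ)
    (hup : ∀ i, μ {ω | X i ω = 1} = 1 / 2) (hdown : ∀ i, μ {ω | X i ω = -1} = 1 / 2)
    (s : Finset ι) (j : ℤ) :
    μ {ω | ∑ i ∈ s, X i ω = j} ≤ (#s).choose (#s / 2) * 2⁻¹ ^ #s := by
  rw [measure_sum_eq_eq_card_mul hmeas hindep hup hdown]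
  gcongr
  calc #{t ∈ s.powerset | 2 * (#t : ℤ) - #s = j}
      ≤ #(s.powersetCard ((j + #s) / 2).toNat) := by
        refine card_le_card fun t ht => ?_
        rw [mem_filter, mem_powerset] at ht
        exact mem_powersetCard.mpr ⟨ht.1, by omega⟩
    _ ≤ (#s).choose (#s / 2) := by
        rw [card_powersetCard]
        exact Nat.choose_le_middle _ _

theorem measure_sum_eq_two_mul_sub_eq_choose_mul [IsProbabilityMeasure μ]
    (hmeas : ∀ i, Measurable (X i)) (hindep : iIndepFun X μ)
    (hup : ∀ i, μ {ω | X i ω = 1} = 1 / 2) (hdown : ∀ i, μ {ω | X i ω = -1} = 1 / 2)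
    (s : Finset ι) (k : ℕ) :
    μ {ω | ∑ i ∈ s, X i ω = 2 * k - #s} = (#s).choose k * 2⁻¹ ^ #s := by
  rw [measure_sum_eq_eq_card_mul hmeas hindep hup hdown, ← card_powersetCard]
  congr 4
  ext t
  simp only [mem_filter, mem_powerset, mem_powersetCard]
  exact and_congr_right fun _ => by omega

end SignPattern

theorem measure_inter_add_eq_le_mul {Ω : Type*} {m₁ m₂ mΩ : MeasurableSpace Ω}
    {μ : Measure Ω} (hm₁ : m₁ ≤ mΩ) (hind : Indep m₁ m₂ μ) {A : Set Ω} (hA : MeasurableSet[m₁] A)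
    {Y Z : Ω → ℤ} (hY : Measurable[m₁] Y) (hZ : Measurable[m₂] Z) {M : ℝ≥0∞}
    (hM : ∀ k, μ {ω | Z ω = k} ≤ M) (c : ℤ) :
    μ (A ∩ {ω | Y ω + Z ω = c}) ≤ μ A * M := by
  have hAY : ∀ j, MeasurableSet[m₁] (A ∩ {ω | Y ω = j}) :=
    fun j => hA.inter (hY (measurableSet_singleton j))
  calc μ (A ∩ {ω | Y ω + Z ω = c})
      ≤ μ (⋃ j, A ∩ {ω | Y ω = j} ∩ {ω | Z ω = c - j}) := by
        refine measure_mono fun ω ⟨hωA, hω⟩ => Set.mem_iUnion.mpr ⟨Y ω, ⟨hωA, rfl⟩, ?_⟩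
        simp only [Set.mem_ofPred_eq] at hω ⊢
        omega
    _ ≤ ∑' j, μ (A ∩ {ω | Y ω = j} ∩ {ω | Z ω = c - j}) := measure_iUnion_le _
    _ = ∑' j, μ (A ∩ {ω | Y ω = j}) * μ {ω | Z ω = c - j} :=
        tsum_congr fun j =>
          (Indep_iff _ _ μ).mp hind _ _ (hAY j) (hZ (measurableSet_singleton _))
    _ ≤ ∑' j, μ (A ∩ {ω | Y ω = j}) * M := ENNReal.tsum_le_tsum fun j => by gcongr; exact hM _
    _ = (∑' j, μ (A ∩ {ω | Y ω = j})) * M := ENNReal.tsum_mul_right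
    _ ≤ μ A * M := by
        gcongr
        refine (tsum_meas_le_meas_iUnion_of_disjoint μ (fun j => hm₁ _ (hAY j)) ?_).trans
          (measure_mono (Set.iUnion_subset fun j => Set.inter_subset_left))
        intro j j' hne
        exact Set.disjoint_left.mpr fun ω h h' => hne (h.2.symm.trans h'.2)

theorem measurable_sum_iSup_comap {ι Ω : Type*} {X : ι → Ω → ℤ} {s : Finset ι}
    {T : Set ι} (hsT : ↑s ⊆ T) :
    Measurable[⨆ i ∈ T, MeasurableSpace.comap (X i) inferInstance] fun ω => ∑ i ∈ s, X i ω :=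
  Finset.measurable_sum _ fun i hi =>
    measurable_iff_comap_le.mpr (le_iSup₂ (f := fun j (_ : j ∈ T) =>
      MeasurableSpace.comap (X j) inferInstance) i (hsT hi))

theorem comap_partialSums_le {Ω : Type*} (X : ℕ → Ω → ℤ) (n : ℕ) :
    MeasurableSpace.comap (fun ω (k : Fin (n + 2)) => ∑ m ∈ range k, X m ω) MeasurableSpace.pi
      ≤ ⨆ i ∈ (range (n + 1) : Set ℕ), MeasurableSpace.comap (X i) inferInstance :=
  Measurable.comap_le <| @measurable_pi_lambda _ _ _ (_) _ _ fun k =>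
    measurable_sum_iSup_comap fun i hi => by
      simp only [coe_range, Set.mem_Iio] at hi ⊢
      omega

/-- for the simple symmetric random walk `S_k = X_0 + ⋯ + X_{k-1}` with
i.i.d. increments uniform on `{-1,+1}`, there is a finite constant `c` such that for
every `n` and every event `A` measurable w.r.t. `(S_0, …, S_{n+1})`,
`P(A ∩ {S_{2n+1} = -1}) ≤ c · P(A) · P(S_{2n+1} = -1)`, i.e. `P(A | S_{2n+1}=-1) ≤ c P(A)`. -/
theorem bridge_conditioning_bound
    {Ω : Type*} [MeasurableSpace Ω] (μ : Measure Ω) [IsProbabilityMeasure μ]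
    (X : ℕ → Ω → ℤ) (hmeas : ∀ i, Measurable (X i))
    (hindep : iIndepFun X μ)
    (hup : ∀ i, μ {ω | X i ω = 1} = 1/2)
    (hdown : ∀ i, μ {ω | X i ω = -1} = 1/2) :
    ∃ c : ENNReal, c ≠ ⊤ ∧ ∀ n : ℕ, ∀ A : Set Ω,
      MeasurableSet[MeasurableSpace.comap
        (fun ω => fun k : Fin (n + 2) => ∑ m ∈ Finset.range k, X m ω)
        MeasurableSpace.pi] A →
      μ (A ∩ {ω | (∑ m ∈ Finset.range (2 * n + 1), X m ω) = -1})
        ≤ c * μ A * μ {ω | (∑ m ∈ Finset.range (2 * n + 1), X m ω) = -1} := by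
  refine ⟨2, ENNReal.ofNat_ne_top, fun n A hA => ?_⟩
  have hsplit (ω : Ω) : ∑ m ∈ range (2 * n + 1), X m ω
      = ∑ m ∈ range (n + 1), X m ω + ∑ m ∈ Ico (n + 1) (2 * n + 1), X m ω :=
    (sum_range_add_sum_Ico _ (by omega)).symm
  have hind := indep_iSup_of_disjoint (fun i => (hmeas i).comap_le) hindep.iIndep
    (S := range (n + 1)) (T := Ico (n + 1) (2 * n + 1)) (by
      rw [disjoint_coe, range_eq_Ico]; exact Ico_disjoint_Ico_consecutive _ _ _)
  have hcond : μ (A ∩ {ω | ∑ m ∈ range (2 * n + 1), X m ω = -1})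
      ≤ μ A * (n.choose (n / 2) * 2⁻¹ ^ n) := by
    simp_rw [hsplit]
    refine measure_inter_add_eq_le_mul (iSup₂_le fun i _ => (hmeas i).comap_le) hind
      (comap_partialSums_le X n _ hA) (measurable_sum_iSup_comap subset_rfl)
      (measurable_sum_iSup_comap subset_rfl) (fun k => ?_) (-1)
    simpa [show 2 * n - n = n by omega] using
      measure_sum_eq_le_choose_half_mul hmeas hindep hup hdown (Ico (n + 1) (2 * n + 1)) k
  have hB :=
    measure_sum_eq_two_mul_sub_eq_choose_mul hmeas hindep hup hdown (range (2 * n + 1)) n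
  push_cast [card_range, show 2 * (n : ℤ) - (2 * n + 1) = -1 by ring] at hB
  calc _ ≤ μ A * (n.choose (n / 2) * 2⁻¹ ^ n) := hcond
    _ ≤ μ A * (2 * μ {ω | ∑ m ∈ range (2 * n + 1), X m ω = -1}) := by
        rw [hB]; gcongr μ A * ?_; exact ENNReal.choose_half_mul_inv_two_pow_le_two_mul n
    _ = 2 * μ A * μ {ω | ∑ m ∈ range (2 * n + 1), X m ω = -1} := by ring
end

section
/- Let g ∈ C⁺[0,1] be not identically zero. Then there exists x ∈ [0,1] such that D_g(x, (x+q) mod 1) ≠ 0 for any fixed rational q ∈ (0,1); equivalently, it is not the case that x and x+q mod 1 are corners of the same node of the tree T_g for all x. -/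
noncomputable def Dg (g : ℝ → ℝ) (s t : ℝ) : ℝ :=
  g s + g t - 2 * sInf (g '' Set.uIcc s t)

/-- The 1-periodic extension of `g` (restricted from `[0,1)`). -/
noncomputable def perExt (g : ℝ → ℝ) : ℝ → ℝ := fun x => g (Int.fract x)

/-- if `g ∈ C⁺[0,1]` is not identically zero, then for any rational
`q ∈ (0,1)` there exists `x ∈ [0,1]` with `D_g(x, (x+q) mod 1) ≠ 0` (computed for the
1-periodic extension of `g`); equivalently, `x` and `x+q mod 1` are not corners of the
same node of `T_g` for all `x`. -/
theorem not_all_identified_by_rational_shift (g : ℝ → ℝ)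
    (hgc : ContinuousOn g (Set.Icc 0 1))
    (hgpos : ∀ x ∈ Set.Icc (0:ℝ) 1, 0 ≤ g x)
    (hg0 : g 0 = 0) (hg1 : g 1 = 0)
    (hnz : ∃ x ∈ Set.Icc (0:ℝ) 1, g x ≠ 0)
    (q : ℚ) (hq0 : 0 < (q : ℝ)) (hq1 : (q : ℝ) < 1) :
    ∃ x ∈ Set.Icc (0:ℝ) 1, Dg (perExt g) x (x + (q : ℝ)) ≠ 0 := by
  by_contra hcon
  push_neg at hcon
  set h : ℝ → ℝ := perExt g with hh
  have hper : ∀ (z : ℝ) (n : ℤ), h (z + n) = h z := by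
    intro z n
    simp [hh, perExt, Int.fract_add_intCast]
  have hnn : ∀ z : ℝ, 0 ≤ h z := by
    intro z
    exact hgpos _ ⟨Int.fract_nonneg z, (Int.fract_lt_one z).le⟩
  -- the key step lemma on [0,1]
  have step0 : ∀ x ∈ Set.Icc (0:ℝ) 1, ∀ t ∈ Set.Icc x (x + (q:ℝ)), h x ≤ h t := by
    intro x hx t ht
    have hDg := hcon x hx
    simp only [Dg] at hDg
    have hle : x ≤ x + (q:ℝ) := by linarith
    have hIcc : Set.uIcc x (x + (q:ℝ)) = Set.Icc x (x + (q:ℝ)) := Set.uIcc_of_le hle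
    have hbdd : BddBelow (h '' Set.uIcc x (x + (q:ℝ))) := by
      refine ⟨0, fun y hy => ?_⟩
      obtain ⟨z, _, rfl⟩ := hy
      exact hnn z
    have h1 : sInf (h '' Set.uIcc x (x + (q:ℝ))) ≤ h (x + (q:ℝ)) :=
      csInf_le hbdd ⟨x + (q:ℝ), by rw [hIcc]; exact ⟨hle, le_refl _⟩, rfl⟩
    have h2 : sInf (h '' Set.uIcc x (x + (q:ℝ))) ≤ h t :=
      csInf_le hbdd ⟨t, by rw [hIcc]; exact ht, rfl⟩
    linarith
  -- extend to all real x by periodicity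
  have step : ∀ x t : ℝ, t ∈ Set.Icc x (x + (q:ℝ)) → h x ≤ h t := by
    intro x t ht
    have hfl : Int.fract x + (⌊x⌋ : ℝ) = x := Int.fract_add_floor x
    have hf : Int.fract x ∈ Set.Icc (0:ℝ) 1 := ⟨Int.fract_nonneg x, (Int.fract_lt_one x).le⟩
    have hx : h x = h (Int.fract x) := by
      have := hper (Int.fract x) ⌊x⌋
      rw [hfl] at this
      exact this
    have ht' : h t = h (Int.fract x + (t - x)) := by
      have := hper (Int.fract x + (t - x)) ⌊x⌋
      have he : Int.fract x + (t - x) + (⌊x⌋ : ℝ) = t := by linarith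
      rw [he] at this
      exact this
    rw [hx, ht']
    exact step0 _ hf _ ⟨by linarith [ht.1], by linarith [ht.2]⟩
  -- iterate the step
  have iter : ∀ n : ℕ, ∀ x t : ℝ, t ∈ Set.Icc x (x + n * (q:ℝ)) → h x ≤ h t := by
    intro n
    induction n with
    | zero =>
      intro x t ht
      simp only [Nat.cast_zero, zero_mul, add_zero] at ht
      have : t = x := le_antisymm ht.2 ht.1
      rw [this]
    | succ n ih =>
      intro x t ht
      have hnq : 0 ≤ (n:ℝ) * (q:ℝ) := mul_nonneg (Nat.cast_nonneg n) hq0.le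
      have ht2 : t ≤ x + (n:ℝ) * (q:ℝ) + (q:ℝ) := by
        have := ht.2
        push_cast at this
        linarith
      by_cases hc : t ≤ x + (n:ℝ) * (q:ℝ)
      · exact ih x t ⟨ht.1, hc⟩
      · push_neg at hc
        have h1 : h x ≤ h (x + (n:ℝ) * (q:ℝ)) :=
          ih x _ ⟨by linarith, le_refl _⟩
        have h2 : h (x + (n:ℝ) * (q:ℝ)) ≤ h t :=
          step _ _ ⟨hc.le, by linarith⟩
        linarith
  -- h is monotone
  have mono : ∀ x t : ℝ, x ≤ t → h x ≤ h t := by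
    intro x t hxt
    obtain ⟨n, hn⟩ := exists_nat_ge ((t - x) / (q:ℝ))
    have : t - x ≤ (n:ℝ) * (q:ℝ) := by
      rw [div_le_iff₀ hq0] at hn
      linarith
    exact iter n x t ⟨hxt, by linarith⟩
  -- h 1 = h 0 = 0
  have h0 : h 0 = 0 := by simp [hh, perExt, Int.fract_zero, hg0]
  have h1eq : h 1 = 0 := by
    have := hper 0 1
    norm_num at this
    rw [this, h0]
  -- conclude g = 0 on [0,1], contradiction
  have hall : ∀ z ∈ Set.Icc (0:ℝ) 1, g z = 0 := by
    intro z hz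
    rcases eq_or_lt_of_le hz.2 with h1' | h1'
    · rw [h1']; exact hg1
    · have hz' : h z = g z := by
        simp [hh, perExt, Int.fract_eq_self.mpr ⟨hz.1, h1'⟩]
      have hu : h z ≤ h 1 := mono z 1 hz.2
      have hl : 0 ≤ h z := hnn z
      rw [← hz']
      linarith [h1eq ▸ hu]
  obtain ⟨x, hx, hgx⟩ := hnz
  exact hgx (hall x hx)
end
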